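/- arXiv:1504.08291 — 2 statements merged into one kernel-verified Lean document; each statement's English description precedes it below -/
import Mathlib

section
/- For any nonzero vectors x, y ∈ ℝ^n with angle θ ∈ [0, π] between them, (1/2)‖x − y‖₂² + ‖x‖₂‖y‖₂ (1/π)(sin θ − θ cos θ) ≤ ‖x − y‖₂². That is, the expected squared distance after a random Gaussian ReLU layer is at most the original squared distance. -/
/-!
The term `(sin θ - θ cos θ) / π` is at most `1 - cos θ` on `[0, π]`, because
`π (1 - cos θ) - (sin θ - θ cos θ) = (π - θ)(1 - cos θ) + (θ - sin θ)`.
By the law of cosines and AM-GM, `‖x - y‖² ≥ 2 ‖x‖ ‖y‖ (1 - cos θ)`, so the correction term is at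
most half of `‖x - y‖²`.
-/

open Real InnerProductGeometry
open scoped RealInnerProductSpace

lemma sin_sub_mul_cos_le_pi_mul_one_sub_cos {θ : ℝ} (h0 : 0 ≤ θ) (hπ : θ ≤ π) :
    sin θ - θ * cos θ ≤ π * (1 - cos θ) := by
  have hsin : sin θ ≤ θ := sin_le h0
  have hcos : 0 ≤ (π - θ) * (1 - cos θ) :=
    mul_nonneg (sub_nonneg.mpr hπ) (sub_nonneg.mpr (cos_le_one θ))
  linarith

lemma two_mul_norm_mul_norm_mul_one_sub_cos_angle_le_norm_sub_sq
    {V : Type*} [NormedAddCommGroup V] [InnerProductSpace ℝ V] (x y : V) :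
    2 * (‖x‖ * ‖y‖) * (1 - cos (angle x y)) ≤ ‖x - y‖ ^ 2 := by
  have hcosines := norm_sub_sq_eq_norm_sq_add_norm_sq_sub_two_mul_norm_mul_norm_mul_cos_angle x y
  nlinarith [sq_nonneg (‖x‖ - ‖y‖)]

theorem expected_sq_distance_after_layer_le_general
    (n : ℕ) (x y : EuclideanSpace ℝ (Fin n))
    (θ : ℝ) (hθ : θ = arccos (⟪x, y⟫ / (‖x‖ * ‖y‖))) :
    1 / 2 * ‖x - y‖ ^ 2 + ‖x‖ * ‖y‖ * (1 / π * (sin θ - θ * cos θ))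
      ≤ ‖x - y‖ ^ 2 := by
  obtain rfl : θ = angle x y := hθ
  have hψ : 1 / π * (sin (angle x y) - angle x y * cos (angle x y)) ≤ 1 - cos (angle x y) := by
    rw [one_div_mul_eq_div, div_le_iff₀' pi_pos]
    exact sin_sub_mul_cos_le_pi_mul_one_sub_cos (angle_nonneg x y) (angle_le_pi x y)
  have hcorr := mul_le_mul_of_nonneg_left hψ (by positivity : 0 ≤ ‖x‖ * ‖y‖)
  linarith [two_mul_norm_mul_norm_mul_one_sub_cos_angle_le_norm_sub_sq x y]

theorem expected_sq_distance_after_layer_le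
    (n : ℕ) (x y : EuclideanSpace ℝ (Fin n)) (hx : x ≠ 0) (hy : y ≠ 0)
    (θ : ℝ) (hθ : θ = arccos (⟪x, y⟫ / (‖x‖ * ‖y‖))) :
    1 / 2 * ‖x - y‖ ^ 2 + ‖x‖ * ‖y‖ * (1 / π * (sin θ - θ * cos θ))
      ≤ ‖x - y‖ ^ 2 :=
  expected_sq_distance_after_layer_le_general n x y θ hθ
end

section
/- The map θ ↦ cos θ + (sin θ − θ cos θ)/π is monotone nonincreasing on [0, π]; consequently the output-angle map φ(θ) = arccos(cos θ + (sin θ − θ cos θ)/π) is monotone nondecreasing on [0, π] (the random ReLU layer preserves the order of angles in expectation). -/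
open Real

theorem output_angle_monotone :
    AntitoneOn (fun θ : ℝ => cos θ + (sin θ - θ * cos θ) / π) (Set.Icc 0 π) ∧
    MonotoneOn (fun θ : ℝ => arccos (cos θ + (sin θ - θ * cos θ) / π))
      (Set.Icc 0 π) := by
  have hπ : (0:ℝ) < π := Real.pi_pos
  have hanti : AntitoneOn (fun θ : ℝ => cos θ + (sin θ - θ * cos θ) / π)
      (Set.Icc 0 π) := by
    apply antitoneOn_of_deriv_nonpos (convex_Icc 0 π)
    · fun_prop
    · intro x hx
      exact (Real.differentiable_cos.add
        ((Real.differentiable_sin.sub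
          (differentiable_id.mul Real.differentiable_cos)).div_const π)).differentiableAt.differentiableWithinAt
    · intro x hx
      rw [interior_Icc] at hx
      have : deriv (fun θ : ℝ => cos θ + (sin θ - θ * cos θ) / π) x
          = -sin x + (x * sin x) / π := by
        have h1 : HasDerivAt (fun θ : ℝ => cos θ + (sin θ - θ * cos θ) / π)
            (-sin x + (cos x - (1 * cos x + x * (-sin x))) / π) x := by
          exact ((Real.hasDerivAt_cos x).add
            (((Real.hasDerivAt_sin x).sub
              ((hasDerivAt_id x).mul (Real.hasDerivAt_cos x))).div_const π))
        have := h1.deriv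
        rw [this]; ring
      rw [this]
      have hs : 0 ≤ sin x := Real.sin_nonneg_of_nonneg_of_le_pi hx.1.le hx.2.le
      have hxπ : x ≤ π := hx.2.le
      have : (x * sin x) / π ≤ sin x := by
        rw [div_le_iff₀ hπ]
        nlinarith
      linarith
  refine ⟨hanti, ?_⟩
  have harc : Antitone Real.arccos := by
    intro a b hab
    unfold Real.arccos
    simp only [sub_le_sub_iff_left]
    exact Real.monotone_arcsin hab
  exact harc.comp_antitoneOn hanti
end
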